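/- Lemma 1: In the canonical T-LEK model, for every world w_I ∈ W_c and all formulas Φ, Ψ ∈ L_{T-LEK}, if BΦ ∈ w_I but BΨ ∉ w_I, then there exists v_I ∈ R_c(w_I) such that Φ ∈ v_I if and only if Ψ ∉ v_I. -/

import Mathlib

open Classical

/-! ## Time intervals -/

/-- A time interval `[lo, hi]` over ℕ; `hi = ⊤` encodes the infinite interval `[lo, ∞)`. -/
structure TInt where
  lo : ℕ
  hi : ℕ∞
deriving DecidableEq

/-- The set of time instants belonging to the interval. -/
def TInt.toSet (I : TInt) : Set ℕ := {n | I.lo ≤ n ∧ (n : ℕ∞) ≤ I.hi}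

/-- The smallest interval including both given intervals (the operation `⊎`). -/
noncomputable def TInt.hull (I J : TInt) : TInt := ⟨min I.lo J.lo, max I.hi J.hi⟩

/-! ## The static language L_{T-LEK} -/

/-- Formulas of `L_{T-LEK}`: atoms `p(t1,t2)` (predicate symbols coded by ℕ),
negation, the MTL `always` operator `□_I`, belief `B`, knowledge `K`,
conjunction and implication. -/
inductive Formula where
  | atom : ℕ → ℕ → ℕ → Formula
  | neg  : Formula → Formula
  | box  : TInt → Formula → Formula
  | bel  : Formula → Formula
  | know : Formula → Formula
  | and  : Formula → Formula → Formula
  | imp  : Formula → Formula → Formula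
deriving DecidableEq

/-- Defined biconditional. -/
def Formula.iff (φ ψ : Formula) : Formula := .and (.imp φ ψ) (.imp ψ φ)

/-- The time function `T` on static formulas. -/
noncomputable def Formula.timeOf : Formula → TInt
  | .atom _ t1 t2 => ⟨t1, (t2 : ℕ∞)⟩
  | .neg φ => φ.timeOf
  | .box I _ => I
  | .bel φ => φ.timeOf
  | .know φ => φ.timeOf
  | .and φ ψ => TInt.hull φ.timeOf ψ.timeOf
  | .imp φ ψ => TInt.hull φ.timeOf ψ.timeOf

/-! ## Models -/

/-- The data of a T-LEK model: worlds, accessibility `R`, neighbourhood `N`,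
valuation `V` (on coded atoms `p(t1,t2)`) and the interval `itv w` indexing each
world `w` (so `w` is the world `w_I` with `I = itv w`). -/
structure TModel where
  W : Type
  R : W → W → Prop
  N : W → Set (Set W)
  V : W → ℕ → ℕ → ℕ → Prop
  itv : W → TInt

/-- The conditions making the data a genuine T-LEK model: `R` is an equivalence
relation, every neighbourhood member consists of `R`-reachable worlds, and
neighbourhoods are monotone along `R`. -/
def TModel.IsTLEK (M : TModel) : Prop :=
  Equivalence M.R ∧
  (∀ w, ∀ X ∈ M.N w, ∀ v ∈ X, M.R w v) ∧
  (∀ w v, M.R w v → M.N w ⊆ M.N v)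

/-- Truth conditions for `L_{T-LEK}` formulas at a world of a model. -/
def TModel.sat (M : TModel) : M.W → Formula → Prop
  | w, .atom p t1 t2 =>
      M.V w p t1 t2 ∧ (TInt.mk t1 (t2 : ℕ∞)).toSet ⊆ (M.itv w).toSet
  | w, .neg φ => ¬ M.sat w φ ∧ φ.timeOf.toSet ⊆ (M.itv w).toSet
  | w, .and φ ψ => M.sat w φ ∧ M.sat w ψ ∧
      φ.timeOf.toSet ⊆ (M.itv w).toSet ∧ ψ.timeOf.toSet ⊆ (M.itv w).toSet
  | w, .imp φ ψ => (¬ M.sat w φ ∨ M.sat w ψ) ∧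
      φ.timeOf.toSet ⊆ (M.itv w).toSet ∧ ψ.timeOf.toSet ⊆ (M.itv w).toSet
  | w, .bel φ =>
      {v | M.sat v φ ∧ M.R w v} ∈ M.N w ∧ φ.timeOf.toSet ⊆ (M.itv w).toSet
  | w, .know φ =>
      (∀ v, M.R w v → M.sat v φ) ∧ φ.timeOf.toSet ⊆ (M.itv w).toSet
  | w, .box J φ =>
      φ.timeOf.toSet ⊆ J.toSet ∧ J.toSet ⊆ (M.itv w).toSet ∧
      ∀ v, M.R w v → M.sat v φ

/-! ## Mental operations and the dynamic language -/

/-- Mental operations: `+φ` (learning a perception), `∩(φ,ψ)` (conjunction),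
`⊢(φ,ψ)` (inference), `⊣(p(t1,t2),q(t3,t4))` (revision, coded by the predicate
symbols and time stamps of the two atoms). -/
inductive MOp where
  | plus  : Formula → MOp
  | inter : Formula → Formula → MOp
  | infer : Formula → Formula → MOp
  | rev   : ℕ → ℕ → ℕ → ℕ → ℕ → ℕ → MOp
deriving DecidableEq

/-- The updated neighbourhood model `M^α`. -/
noncomputable def TModel.update (M : TModel) (α : MOp) : TModel :=
  { M with
    N := fun w =>
      match α with
      | .plus φ =>
          if φ.timeOf.toSet ⊆ (M.itv w).toSet then
            insert {v | M.sat v φ ∧ M.R w v} (M.N w)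
          else M.N w
      | .inter φ ψ =>
          if M.sat w (.bel φ) ∧ M.sat w (.bel ψ) ∧
              (TInt.hull φ.timeOf ψ.timeOf).toSet ⊆ (M.itv w).toSet then
            insert {v | M.sat v (.and φ ψ) ∧ M.R w v} (M.N w)
          else M.N w
      | .infer φ ψ =>
          if M.sat w (.bel φ) ∧ M.sat w (.know (.imp φ ψ)) ∧
              ψ.timeOf.toSet ⊆ (M.itv w).toSet then
            insert {v | M.sat v ψ ∧ M.R w v} (M.N w)
          else M.N w
      | .rev p t1 t2 q t3 t4 =>
          if M.sat w (.bel (.atom p t1 t2)) ∧ M.sat w (.bel (.atom q t3 t4)) ∧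
              M.sat w (.know (.imp (.atom p t1 t2) (.neg (.atom q t3 t4)))) ∧
              (Set.Icc t3 t4 \ Set.Icc t1 t2) ⊆ (M.itv w).toSet ∧
              ¬ ∃ t5 t6, Set.Icc t1 t2 ⊂ Set.Icc t5 t6 ∧
                  M.sat w (.bel (.atom q t5 t6)) then
            M.N w \ {{v | M.sat v (.atom q (max t1 t3) (min t2 t4)) ∧ M.R w v}}
          else M.N w }

/-- Formulas of the dynamic language `L_{T-DLEK}`: the static language enriched
with `[α]φ` for mental operations `α`. -/
inductive DFormula where
  | atom : ℕ → ℕ → ℕ → DFormula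
  | neg  : DFormula → DFormula
  | box  : TInt → DFormula → DFormula
  | bel  : DFormula → DFormula
  | know : DFormula → DFormula
  | and  : DFormula → DFormula → DFormula
  | imp  : DFormula → DFormula → DFormula
  | act  : MOp → DFormula → DFormula
deriving DecidableEq

/-- Embedding of the static language into the dynamic one. -/
def Formula.toD : Formula → DFormula
  | .atom p t1 t2 => .atom p t1 t2
  | .neg φ => .neg φ.toD
  | .box I φ => .box I φ.toD
  | .bel φ => .bel φ.toD
  | .know φ => .know φ.toD
  | .and φ ψ => .and φ.toD ψ.toD
  | .imp φ ψ => .imp φ.toD ψ.toD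

/-- Defined biconditional on dynamic formulas. -/
def DFormula.iff (φ ψ : DFormula) : DFormula := .and (.imp φ ψ) (.imp ψ φ)

/-- Defined (classical) disjunction on dynamic formulas. -/
def DFormula.orF (φ ψ : DFormula) : DFormula := .neg (.and (.neg φ) (.neg ψ))

/-- The time interval associated to a mental operation. -/
noncomputable def MOp.time : MOp → TInt
  | .plus φ => φ.timeOf
  | .inter φ ψ => TInt.hull φ.timeOf ψ.timeOf
  | .infer _ ψ => ψ.timeOf
  | .rev _ _ _ _ t3 t4 => ⟨t3, (t4 : ℕ∞)⟩

/-- The time function `T` on dynamic formulas. -/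
noncomputable def DFormula.timeOf : DFormula → TInt
  | .atom _ t1 t2 => ⟨t1, (t2 : ℕ∞)⟩
  | .neg φ => φ.timeOf
  | .box I _ => I
  | .bel φ => φ.timeOf
  | .know φ => φ.timeOf
  | .and φ ψ => TInt.hull φ.timeOf ψ.timeOf
  | .imp φ ψ => TInt.hull φ.timeOf ψ.timeOf
  | .act α _ => α.time

/-- Truth conditions for `L_{T-DLEK}` formulas:
`M,w ⊨ [α]φ` iff `M^α,w ⊨ φ` and `T(φ) ⊆ I`. -/
noncomputable def TModel.dsat : (M : TModel) → M.W → DFormula → Prop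
  | M, w, .atom p t1 t2 =>
      M.V w p t1 t2 ∧ (TInt.mk t1 (t2 : ℕ∞)).toSet ⊆ (M.itv w).toSet
  | M, w, .neg φ => ¬ M.dsat w φ ∧ φ.timeOf.toSet ⊆ (M.itv w).toSet
  | M, w, .and φ ψ => M.dsat w φ ∧ M.dsat w ψ ∧
      φ.timeOf.toSet ⊆ (M.itv w).toSet ∧ ψ.timeOf.toSet ⊆ (M.itv w).toSet
  | M, w, .imp φ ψ => (¬ M.dsat w φ ∨ M.dsat w ψ) ∧
      φ.timeOf.toSet ⊆ (M.itv w).toSet ∧ ψ.timeOf.toSet ⊆ (M.itv w).toSet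
  | M, w, .bel φ =>
      {v | M.dsat v φ ∧ M.R w v} ∈ M.N w ∧ φ.timeOf.toSet ⊆ (M.itv w).toSet
  | M, w, .know φ =>
      (∀ v, M.R w v → M.dsat v φ) ∧ φ.timeOf.toSet ⊆ (M.itv w).toSet
  | M, w, .box J φ =>
      φ.timeOf.toSet ⊆ J.toSet ∧ J.toSet ⊆ (M.itv w).toSet ∧
      ∀ v, M.R w v → M.dsat v φ
  | M, w, .act α φ =>
      (M.update α).dsat w φ ∧ φ.timeOf.toSet ⊆ (M.itv w).toSet
termination_by M w φ => sizeOf φ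
decreasing_by all_goals simp_wf <;> omega

/-! ## The T-LEK proof system -/

/-- Evaluation of a formula under an arbitrary propositional assignment to its
non-Boolean components: used to express "being (a substitution instance of) a
classical propositional tautology". -/
def Formula.evalP (v : Formula → Prop) : Formula → Prop
  | .neg φ => ¬ φ.evalP v
  | .and φ ψ => φ.evalP v ∧ ψ.evalP v
  | .imp φ ψ => φ.evalP v → ψ.evalP v
  | .atom p t1 t2 => v (.atom p t1 t2)
  | .box I φ => v (.box I φ)
  | .bel φ => v (.bel φ)
  | .know φ => v (.know φ)

/-- Theorems of the T-LEK proof system: classical propositional tautologies,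
modus ponens, necessitation for `K`, and the five T-LEK axioms. -/
inductive TLEKThm : Formula → Prop where
  | taut (φ : Formula) : (∀ v, φ.evalP v) → TLEKThm φ
  | mp {φ ψ : Formula} : TLEKThm (.imp φ ψ) → TLEKThm φ → TLEKThm ψ
  | nec {φ : Formula} : TLEKThm φ → TLEKThm (.know φ)
  | axK (φ ψ : Formula) :
      TLEKThm (.imp (.and (.know φ) (.know (.imp φ ψ))) (.know ψ))
  | axT (φ : Formula) : TLEKThm (.imp (.know φ) φ)
  | ax4 (φ : Formula) : TLEKThm (.imp (.know φ) (.know (.know φ)))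
  | ax5 (φ : Formula) :
      TLEKThm (.imp (.neg (.know φ)) (.know (.neg (.know φ))))
  | axB (φ ψ : Formula) :
      TLEKThm (.imp (.and (.bel φ) (.know (Formula.iff φ ψ))) (.bel ψ))

/-! ## The T-DLEK proof system -/

/-- Propositional evaluation for dynamic formulas. -/
def DFormula.evalP (v : DFormula → Prop) : DFormula → Prop
  | .neg φ => ¬ φ.evalP v
  | .and φ ψ => φ.evalP v ∧ ψ.evalP v
  | .imp φ ψ => φ.evalP v → ψ.evalP v
  | .atom p t1 t2 => v (.atom p t1 t2)
  | .box I φ => v (.box I φ)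
  | .bel φ => v (.bel φ)
  | .know φ => v (.know φ)
  | .act α φ => v (.act α φ)

/-- Replacement of (all occurrences of) the subformula `ψ` by `χ` in `φ`,
i.e. `φ[ψ/χ]`. -/
def DFormula.substF (ψ χ : DFormula) (φ : DFormula) : DFormula :=
  if φ = ψ then χ
  else
    match φ with
    | .atom p t1 t2 => .atom p t1 t2
    | .neg a => .neg (substF ψ χ a)
    | .box I a => .box I (substF ψ χ a)
    | .bel a => .bel (substF ψ χ a)
    | .know a => .know (substF ψ χ a)
    | .and a b => .and (substF ψ χ a) (substF ψ χ b)
    | .imp a b => .imp (substF ψ χ a) (substF ψ χ b)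
    | .act α a => .act α (substF ψ χ a)

/-- Theorems of the T-DLEK proof system: the T-LEK system (on the dynamic
language) plus the reduction axioms and the replacement rule. -/
inductive TDLEKThm : DFormula → Prop where
  | taut (φ : DFormula) : (∀ v, φ.evalP v) → TDLEKThm φ
  | mp {φ ψ : DFormula} : TDLEKThm (.imp φ ψ) → TDLEKThm φ → TDLEKThm ψ
  | nec {φ : DFormula} : TDLEKThm φ → TDLEKThm (.know φ)
  | axK (φ ψ : DFormula) :
      TDLEKThm (.imp (.and (.know φ) (.know (.imp φ ψ))) (.know ψ))
  | axT (φ : DFormula) : TDLEKThm (.imp (.know φ) φ)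
  | ax4 (φ : DFormula) : TDLEKThm (.imp (.know φ) (.know (.know φ)))
  | ax5 (φ : DFormula) :
      TDLEKThm (.imp (.neg (.know φ)) (.know (.neg (.know φ))))
  | axB (φ ψ : DFormula) :
      TDLEKThm (.imp (.and (.bel φ) (.know (DFormula.iff φ ψ))) (.bel ψ))
  | redAtom (α : MOp) (p t1 t2 : ℕ) :
      TDLEKThm (DFormula.iff (.act α (.atom p t1 t2)) (.atom p t1 t2))
  | redNeg (α : MOp) (φ : DFormula) :
      TDLEKThm (DFormula.iff (.act α (.neg φ)) (.neg (.act α φ)))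
  | redAnd (α : MOp) (φ ψ : DFormula) :
      TDLEKThm (DFormula.iff (.act α (.and φ ψ)) (.and (.act α φ) (.act α ψ)))
  | redK (α : MOp) (φ : DFormula) :
      TDLEKThm (DFormula.iff (.act α (.know φ)) (.know (.act α φ)))
  | redPlus (φ : Formula) (ψ : DFormula) :
      TDLEKThm (DFormula.iff (.act (.plus φ) (.bel ψ))
        (DFormula.orF (.bel (.act (.plus φ) ψ))
          (.know (DFormula.iff (.act (.plus φ) ψ) φ.toD))))
  | redInfer (φ ψ : Formula) (χ : DFormula) :
      TDLEKThm (DFormula.iff (.act (.infer φ ψ) (.bel χ))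
        (DFormula.orF (.bel (.act (.infer φ ψ) χ))
          (.and (.bel φ.toD) (.and (.know (.imp φ.toD ψ.toD))
            (.know (DFormula.iff (.act (.infer φ ψ) χ) ψ.toD))))))
  | redRev (p t1 t2 q t3 t4 : ℕ) (χ : DFormula) :
      TDLEKThm (DFormula.iff (.act (.rev p t1 t2 q t3 t4) (.bel χ))
        (DFormula.orF (.bel (.act (.rev p t1 t2 q t3 t4) χ))
          (.and (.bel (.atom p t1 t2))
            (.and (.know (.imp (.atom p t1 t2) (.neg (.atom q t3 t4))))
              (.know (DFormula.iff (.act (.rev p t1 t2 q t3 t4) χ)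
                (.neg (.atom q t3 t4))))))))
  | redInter (φ ψ : Formula) (χ : DFormula) :
      TDLEKThm (DFormula.iff (.act (.inter φ ψ) (.bel χ))
        (DFormula.orF (.bel (.act (.inter φ ψ) χ))
          (.and (.and (.bel φ.toD) (.bel ψ.toD))
            (.know (DFormula.iff (.act (.inter φ ψ) χ) (.and φ.toD ψ.toD))))))
  | repl {ψ χ : DFormula} (φ : DFormula) :
      TDLEKThm (DFormula.iff ψ χ) →
      TDLEKThm (DFormula.iff φ (DFormula.substF ψ χ φ))

/-! ## Consistency, the canonical model -/

/-- Conjunction of a finite list of formulas (empty list gives a tautology). -/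
def conjList : List Formula → Formula
  | [] => .imp (.atom 0 0 0) (.atom 0 0 0)
  | φ :: l => .and φ (conjList l)

/-- A set of formulas is consistent if no finite conjunction of its members is
refutable in the T-LEK proof system. -/
def Consistent (Γ : Set Formula) : Prop :=
  ¬ ∃ l : List Formula, (∀ φ ∈ l, φ ∈ Γ) ∧ TLEKThm (.neg (conjList l))

/-- Maximal consistent sets of `L_{T-LEK}` formulas. -/
def MaxConsistent (Γ : Set Formula) : Prop :=
  Consistent Γ ∧ ∀ φ, φ ∉ Γ → ¬ Consistent (insert φ Γ)

/-- Worlds of the canonical model: maximal consistent sets. -/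
def CWorld : Type := {Γ : Set Formula // MaxConsistent Γ}

/-- The canonical accessibility relation `R_c`. -/
def CRel (w v : CWorld) : Prop :=
  ∀ φ : Formula, Formula.know φ ∈ w.1 ↔ Formula.know φ ∈ v.1

/-- `A_Φ(w) = {v ∈ R_c(w) | Φ ∈ v}`. -/
def CSet (w : CWorld) (Φ : Formula) : Set CWorld :=
  {v | CRel w v ∧ Φ ∈ v.1}

/-- The canonical T-LEK model. -/
noncomputable def canonicalTLEK : TModel where
  W := CWorld
  R := CRel
  N := fun w => {X | ∃ Φ : Formula, Formula.bel Φ ∈ w.1 ∧ X = CSet w Φ}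
  V := fun w p t1 t2 => Formula.atom p t1 t2 ∈ w.1
  itv := fun w =>
    ⟨sInf {t | ∃ p t', Formula.atom p t t' ∈ w.1},
     sSup {x : ℕ∞ | ∃ p t : ℕ, ∃ t' : ℕ, x = (t' : ℕ∞) ∧ Formula.atom p t t' ∈ w.1}⟩

/-! ## Finite-time formulas and derivability from hypotheses -/

/-- All time intervals occurring in a static formula are finite. -/
def Formula.FinTime : Formula → Prop
  | .atom _ _ _ => True
  | .neg φ => φ.FinTime
  | .box I φ => I.hi ≠ ⊤ ∧ φ.FinTime
  | .bel φ => φ.FinTime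
  | .know φ => φ.FinTime
  | .and φ ψ => φ.FinTime ∧ ψ.FinTime
  | .imp φ ψ => φ.FinTime ∧ ψ.FinTime

/-- All time intervals occurring in a mental operation are finite. -/
def MOp.FinTime : MOp → Prop
  | .plus φ => φ.FinTime
  | .inter φ ψ => φ.FinTime ∧ ψ.FinTime
  | .infer φ ψ => φ.FinTime ∧ ψ.FinTime
  | .rev _ _ _ _ _ _ => True

/-- All time intervals occurring in a dynamic formula are finite. -/
def DFormula.FinTime : DFormula → Prop
  | .atom _ _ _ => True
  | .neg φ => φ.FinTime
  | .box I φ => I.hi ≠ ⊤ ∧ φ.FinTime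
  | .bel φ => φ.FinTime
  | .know φ => φ.FinTime
  | .and φ ψ => φ.FinTime ∧ ψ.FinTime
  | .imp φ ψ => φ.FinTime ∧ ψ.FinTime
  | .act α φ => α.FinTime ∧ φ.FinTime

/-- `φ` is derivable from the hypotheses `Γ` in T-LEK. -/
def DerivFrom (Γ : Set Formula) (φ : Formula) : Prop :=
  ∃ l : List Formula, (∀ ψ ∈ l, ψ ∈ Γ) ∧ TLEKThm (.imp (conjList l) φ)

/-- Conjunction of a finite list of dynamic formulas. -/
def dConjList : List DFormula → DFormula
  | [] => .imp (.atom 0 0 0) (.atom 0 0 0)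
  | φ :: l => .and φ (dConjList l)

/-- `φ` is derivable from the hypotheses `Γ` in T-DLEK. -/
def DDerivFrom (Γ : Set DFormula) (φ : DFormula) : Prop :=
  ∃ l : List DFormula, (∀ ψ ∈ l, ψ ∈ Γ) ∧ TDLEKThm (.imp (dConjList l) φ)

/-! The usual canonical-model argument. If every `v ∈ R_c(w)` contained `Φ` exactly when it
contained `Ψ`, then `K(Φ ↔ Ψ) ∈ w`: otherwise `¬(Φ ↔ Ψ)` together with `{χ | Kχ ∈ w}` is
consistent, and by axioms 4 and 5 any maximal consistent extension of it lies in `R_c(w)`,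
yet contains `¬(Φ ↔ Ψ)`. The axiom `BΦ ∧ K(Φ ↔ Ψ) → BΨ` then puts `BΨ` in `w`. -/

@[simp]
lemma Formula.evalP_conjList (v : Formula → Prop) (l : List Formula) :
    (conjList l).evalP v ↔ ∀ ψ ∈ l, ψ.evalP v := by
  induction l with
  | nil => simp [conjList, Formula.evalP]
  | cons φ l ih => simp [conjList, Formula.evalP, ih]

lemma derivFrom_neg_of_not_consistent_insert {Γ : Set Formula} {φ : Formula}
    (h : ¬ Consistent (insert φ Γ)) : DerivFrom Γ (.neg φ) := by
  obtain ⟨l, hl, hthm⟩ := not_not.1 h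
  refine ⟨l.filter (· ≠ φ), fun ψ hψ => ?_, .mp (.taut _ fun v => ?_) hthm⟩
  · obtain ⟨hψl, hψφ⟩ := List.mem_filter.1 hψ
    exact (hl ψ hψl).resolve_left (by simpa using hψφ)
  · simp only [Formula.evalP, Formula.evalP_conjList]
    intro hl hL hφ
    refine hl fun ψ hψ => ?_
    by_cases hψφ : ψ = φ
    · exact hψφ ▸ hφ
    · exact hL ψ (List.mem_filter.2 ⟨hψ, by simpa using hψφ⟩)

lemma Consistent.exists_maxConsistent_superset {Γ : Set Formula} (h : Consistent Γ) :
    ∃ Δ, Γ ⊆ Δ ∧ MaxConsistent Δ := by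
  have hchain : ∀ c ⊆ {Δ | Consistent Δ}, IsChain (· ⊆ ·) c → c.Nonempty →
      ∃ ub ∈ {Δ | Consistent Δ}, ∀ s ∈ c, s ⊆ ub := by
    refine fun c hc hchain hne => ⟨⋃₀ c, ?_, fun s hs => Set.subset_sUnion_of_mem hs⟩
    rintro ⟨l, hl, hthm⟩
    obtain ⟨t, htc, hlt⟩ := hchain.directedOn.exists_mem_subset_of_finite_of_subset_sUnion
      hne l.finite_toSet hl
    exact hc htc ⟨l, hlt, hthm⟩
  obtain ⟨Δ, hΓΔ, hmax⟩ := zorn_subset_nonempty _ hchain Γ h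
  exact ⟨Δ, hΓΔ, hmax.1, fun φ hφ hcons =>
    hφ (hmax.2 hcons (Set.subset_insert φ Δ) (Set.mem_insert φ Δ))⟩

namespace MaxConsistent

variable {Γ : Set Formula} (hΓ : MaxConsistent Γ)
include hΓ

lemma mem_of_derivFrom {φ : Formula} (h : DerivFrom Γ φ) : φ ∈ Γ := by
  by_contra hφ
  obtain ⟨l, hl, hthm⟩ := h
  obtain ⟨l', hl', hthm'⟩ := derivFrom_neg_of_not_consistent_insert (hΓ.2 φ hφ)
  refine hΓ.1 ⟨l ++ l', fun ψ hψ => ?_, .mp (.mp (.taut _ fun v => ?_) hthm) hthm'⟩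
  · exact (List.mem_append.1 hψ).elim (hl ψ) (hl' ψ)
  · simp only [Formula.evalP, Formula.evalP_conjList, List.mem_append]
    intro h h' hll'
    exact h' (fun ψ hψ => hll' ψ (.inr hψ)) (h fun ψ hψ => hll' ψ (.inl hψ))

lemma mem_of_thm {φ : Formula} (h : TLEKThm φ) : φ ∈ Γ :=
  hΓ.mem_of_derivFrom ⟨[], by simp, .mp (.taut _ fun _ => by simp [Formula.evalP]) h⟩

lemma mem_of_taut₂ {a b c : Formula} (h : ∀ v, a.evalP v → b.evalP v → c.evalP v)
    (ha : a ∈ Γ) (hb : b ∈ Γ) : c ∈ Γ :=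
  hΓ.mem_of_derivFrom ⟨[a, b], by simp [ha, hb], .taut _ fun v hab => by
    simp only [Formula.evalP_conjList, List.mem_cons, List.not_mem_nil] at hab
    exact h v (hab a (by simp)) (hab b (by simp))⟩

lemma mp {a b : Formula} (hab : Formula.imp a b ∈ Γ) (ha : a ∈ Γ) : b ∈ Γ :=
  hΓ.mem_of_taut₂ (a := .imp a b) (b := a) (fun _ hab ha => hab ha) hab ha

lemma and_mem {a b : Formula} (ha : a ∈ Γ) (hb : b ∈ Γ) : Formula.and a b ∈ Γ :=
  hΓ.mem_of_taut₂ (fun _ ha hb => ⟨ha, hb⟩) ha hb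

lemma neg_mem_iff {φ : Formula} : Formula.neg φ ∈ Γ ↔ φ ∉ Γ := by
  refine ⟨fun hn h => hΓ.1 ⟨[φ, .neg φ], by simp [h, hn], .taut _ fun v => ?_⟩,
    fun h => hΓ.mem_of_derivFrom (derivFrom_neg_of_not_consistent_insert (hΓ.2 φ h))⟩
  simp [Formula.evalP]

lemma iff_mem_of_mem_iff {a b : Formula} (h : a ∈ Γ ↔ b ∈ Γ) : Formula.iff a b ∈ Γ := by
  by_cases ha : a ∈ Γ
  · exact hΓ.mem_of_taut₂ (fun _ ha hb => ⟨fun _ => hb, fun _ => ha⟩) ha (h.1 ha)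
  · exact hΓ.mem_of_taut₂ (fun _ ha hb => ⟨fun h => (ha h).elim, fun h => (hb h).elim⟩)
      (hΓ.neg_mem_iff.2 ha) (hΓ.neg_mem_iff.2 (mt h.2 ha))

lemma know_mp {a b : Formula} (hab : Formula.know (.imp a b) ∈ Γ)
    (ha : Formula.know a ∈ Γ) : Formula.know b ∈ Γ :=
  hΓ.mp (hΓ.mem_of_thm (.axK a b)) (hΓ.and_mem ha hab)

lemma know_conjList_mem (l : List Formula) (hl : ∀ ψ ∈ l, Formula.know ψ ∈ Γ) :
    Formula.know (conjList l) ∈ Γ := by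
  induction l with
  | nil => exact hΓ.mem_of_thm (.nec (.taut _ fun _ => by simp))
  | cons φ l ih =>
    have hpair : Formula.know (.imp φ (.imp (conjList l) (conjList (φ :: l)))) ∈ Γ :=
      hΓ.mem_of_thm (.nec (.taut _ fun _ hφ hl => by simp_all))
    exact hΓ.know_mp (hΓ.know_mp hpair (hl φ (by simp)))
      (ih fun ψ hψ => hl ψ (List.mem_cons_of_mem φ hψ))

lemma know_mem_of_derivFrom {φ : Formula} (h : DerivFrom {ψ | Formula.know ψ ∈ Γ} φ) :
    Formula.know φ ∈ Γ :=
  let ⟨l, hl, hthm⟩ := h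
  hΓ.know_mp (hΓ.mem_of_thm (.nec hthm)) (hΓ.know_conjList_mem l hl)

end MaxConsistent

lemma crel_of_know_subset (w v : CWorld) (h : {ψ | Formula.know ψ ∈ w.1} ⊆ v.1) :
    CRel w v := by
  intro ψ
  refine ⟨fun hw => h (w.2.mp (w.2.mem_of_thm (.ax4 ψ)) hw), fun hv => ?_⟩
  by_contra hw
  have hKneg : Formula.know (.neg (.know ψ)) ∈ w.1 :=
    w.2.mp (w.2.mem_of_thm (.ax5 ψ)) (w.2.neg_mem_iff.2 hw)
  exact v.2.neg_mem_iff.1 (h hKneg) hv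

lemma know_mem_of_forall_crel (w : CWorld) {χ : Formula}
    (h : ∀ v : CWorld, CRel w v → χ ∈ v.1) : Formula.know χ ∈ w.1 := by
  by_contra hK
  have hcons : Consistent (insert (.neg χ) {ψ | Formula.know ψ ∈ w.1}) := by
    intro hinc
    have hKnn : Formula.know (.neg (.neg χ)) ∈ w.1 :=
      w.2.know_mem_of_derivFrom (derivFrom_neg_of_not_consistent_insert (not_not.2 hinc))
    have hdne : TLEKThm (.imp (.neg (.neg χ)) χ) := .taut _ fun _ => not_not.1
    exact hK (w.2.know_mp (w.2.mem_of_thm (.nec hdne)) hKnn)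
  obtain ⟨Δ, hsub, hΔ⟩ := hcons.exists_maxConsistent_superset
  have hχ : χ ∈ Δ :=
    h ⟨Δ, hΔ⟩ (crel_of_know_subset w ⟨Δ, hΔ⟩ ((Set.subset_insert _ _).trans hsub))
  exact hΔ.neg_mem_iff.1 (hsub (Set.mem_insert _ _)) hχ

/-- Lemma 1: in the canonical T-LEK model, if `BΦ ∈ w` but
`BΨ ∉ w`, then there is `v ∈ R_c(w)` with `Φ ∈ v ↔ Ψ ∉ v`. -/
theorem canonical_bel_separation (w : CWorld) (Φ Ψ : Formula)
    (h1 : Formula.bel Φ ∈ w.1) (h2 : Formula.bel Ψ ∉ w.1) :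
    ∃ v : CWorld, CRel w v ∧ (Φ ∈ v.1 ↔ Ψ ∉ v.1) := by
  by_contra hsep
  have hK : Formula.know (Formula.iff Φ Ψ) ∈ w.1 :=
    know_mem_of_forall_crel w fun v hv => v.2.iff_mem_of_mem_iff <| by
      have := not_and.1 (not_exists.1 hsep v) hv
      tauto
  exact h2 (w.2.mp (w.2.mem_of_thm (.axB Φ Ψ)) (w.2.and_mem h1 hK))
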